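/- arXiv:2310.14801 — 3 statements merged into one kernel-verified Lean document; each statement's English description precedes it below -/
import Mathlib

section
/- Let ℓ ≥ 0 and 0 < s. The simplex Σ_{ℓ,ℓ}, having ℓ+1 pairwise disjoint short edges of length 2s with all other edges of unit length, has squared circumradius (ℓ + 2s^2)/(2ℓ+2). In particular its circumradius satisfies ρ^2 = R_ℓ^2 + (1 - 2R_ℓ^2) s^2 where R_ℓ^2 = ℓ/(2(ℓ+1)). -/
open scoped RealInnerProductSpace
set_option maxHeartbeats 1000000


/-- The simplex `Σ_{ℓ,ℓ}` with `ℓ+1` pairwise disjoint short edges of length `2s`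
and all other edges of unit length has squared circumradius `(ℓ + 2s²)/(2ℓ+2)`,
i.e. `ρ² = Rℓ² + (1 - 2Rℓ²)s²` with `Rℓ² = ℓ/(2(ℓ+1))`. -/
theorem ideal_simplex_ll_circumradius (ℓ : ℕ) (s : ℝ)
    (hs0 : 0 < s) (hs1 : s < 1 / Real.sqrt 2)
    (a b : Fin (ℓ + 1) → EuclideanSpace ℝ (Fin (2 * ℓ + 1)))
    (hshort : ∀ i, dist (a i) (b i) = 2 * s)
    (haa : ∀ i j, i ≠ j → dist (a i) (a j) = 1)
    (hbb : ∀ i j, i ≠ j → dist (b i) (b j) = 1)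
    (hab : ∀ i j, i ≠ j → dist (a i) (b j) = 1)
    (o : EuclideanSpace ℝ (Fin (2 * ℓ + 1))) (ρ : ℝ) (hρ : 0 ≤ ρ)
    (hoa : ∀ i, dist o (a i) = ρ) (hob : ∀ i, dist o (b i) = ρ) :
    ρ ^ 2 = ((ℓ : ℝ) + 2 * s ^ 2) / (2 * (ℓ : ℝ) + 2) ∧
      ρ ^ 2 = (ℓ : ℝ) / (2 * ((ℓ : ℝ) + 1)) +
        (1 - 2 * ((ℓ : ℝ) / (2 * ((ℓ : ℝ) + 1)))) * s ^ 2 := by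
  have hs2 : s ^ 2 < 1 / 2 := by
    have h2 : (0:ℝ) < Real.sqrt 2 := Real.sqrt_pos.mpr (by norm_num)
    have hsq : Real.sqrt 2 ^ 2 = 2 := Real.sq_sqrt (by norm_num)
    have : s * Real.sqrt 2 < 1 := by
      rw [div_eq_mul_inv, one_mul] at hs1
      calc s * Real.sqrt 2 < (Real.sqrt 2)⁻¹ * Real.sqrt 2 := by
            exact mul_lt_mul_of_pos_right hs1 h2
        _ = 1 := inv_mul_cancel₀ (ne_of_gt h2)
    nlinarith

  set w : Fin (ℓ + 1) ⊕ Fin (ℓ + 1) → EuclideanSpace ℝ (Fin (2 * ℓ + 1)) :=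
    Sum.elim (fun i => a i - o) (fun i => b i - o) with hw
  have hdep : ¬ LinearIndependent ℝ w := by
    intro h
    have hc := h.fintype_card_le_finrank
    rw [finrank_euclideanSpace_fin] at hc
    simp [Fintype.card_sum] at hc
    omega
  obtain ⟨g, hg, k₀, hk₀⟩ := Fintype.not_linearIndependent_iff.mp hdep
  -- inner product formula
  have hip : ∀ x y : EuclideanSpace ℝ (Fin (2 * ℓ + 1)), dist o x = ρ → dist o y = ρ →
      ⟪x - o, y - o⟫ = ρ ^ 2 - dist x y ^ 2 / 2 := by
    intro x y hx hy
    have h1 := norm_sub_sq_real (x - o) (y - o)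
    have h2 : (x - o) - (y - o) = x - y := by abel
    rw [h2] at h1
    have hx' : ‖x - o‖ = ρ := by rw [← dist_eq_norm, dist_comm]; exact hx
    have hy' : ‖y - o‖ = ρ := by rw [← dist_eq_norm, dist_comm]; exact hy
    have hxy : ‖x - y‖ = dist x y := (dist_eq_norm x y).symm
    rw [hx', hy', hxy] at h1
    linarith
  set A : ℝ := ∑ i, g (Sum.inl i) with hA
  set B : ℝ := ∑ i, g (Sum.inr i) with hB
  have hrow : ∀ m : Fin (ℓ + 1),
      ((ρ ^ 2 - 1/2) * (A + B) + (1/2) * g (Sum.inl m)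
        + (1/2 - 2 * s ^ 2) * g (Sum.inr m) = 0)
      ∧ ((ρ ^ 2 - 1/2) * (A + B) + (1/2) * g (Sum.inr m)
        + (1/2 - 2 * s ^ 2) * g (Sum.inl m) = 0) := by
    intro m
    constructor
    · have h0 : ⟪∑ k, g k • w k, w (Sum.inl m)⟫ = 0 := by rw [hg]; simp
      rw [sum_inner] at h0
      simp only [real_inner_smul_left] at h0
      rw [Fintype.sum_sum_type] at h0
      have e1 : ∀ i, ⟪w (Sum.inl i), w (Sum.inl m)⟫
          = (ρ ^ 2 - 1/2) + (if i = m then (1/2 : ℝ) else 0) := by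
        intro i
        by_cases h : i = m
        · subst h
          rw [show w (Sum.inl i) = a i - o from rfl,
            hip _ _ (hoa i) (hoa i), dist_self, if_pos rfl]
          ring
        · rw [show w (Sum.inl i) = a i - o from rfl,
            show w (Sum.inl m) = a m - o from rfl,
            hip _ _ (hoa i) (hoa m), haa i m h, if_neg h]
          ring
      have e2 : ∀ i, ⟪w (Sum.inr i), w (Sum.inl m)⟫
          = (ρ ^ 2 - 1/2) + (if i = m then (1/2 - 2 * s ^ 2 : ℝ) else 0) := by
        intro i
        by_cases h : i = m
        · subst h
          rw [show w (Sum.inr i) = b i - o from rfl,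
            show w (Sum.inl i) = a i - o from rfl,
            hip _ _ (hob i) (hoa i), dist_comm, hshort i, if_pos rfl]
          ring
        · rw [show w (Sum.inr i) = b i - o from rfl,
            show w (Sum.inl m) = a m - o from rfl,
            hip _ _ (hob i) (hoa m), dist_comm, hab m i (Ne.symm h), if_neg h]
          ring
      simp only [e1, e2, mul_add, Finset.sum_add_distrib, mul_ite, mul_zero,
        Finset.sum_ite_eq', Finset.mem_univ, if_true, ← Finset.sum_mul] at h0
      rw [← hA, ← hB] at h0
      linarith
    · have h0 : ⟪∑ k, g k • w k, w (Sum.inr m)⟫ = 0 := by rw [hg]; simp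
      rw [sum_inner] at h0
      simp only [real_inner_smul_left] at h0
      rw [Fintype.sum_sum_type] at h0
      have e1 : ∀ i, ⟪w (Sum.inl i), w (Sum.inr m)⟫
          = (ρ ^ 2 - 1/2) + (if i = m then (1/2 - 2 * s ^ 2 : ℝ) else 0) := by
        intro i
        by_cases h : i = m
        · subst h
          rw [show w (Sum.inl i) = a i - o from rfl,
            show w (Sum.inr i) = b i - o from rfl,
            hip _ _ (hoa i) (hob i), hshort i, if_pos rfl]
          ring
        · rw [show w (Sum.inl i) = a i - o from rfl,
            show w (Sum.inr m) = b m - o from rfl,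
            hip _ _ (hoa i) (hob m), hab i m h, if_neg h]
          ring
      have e2 : ∀ i, ⟪w (Sum.inr i), w (Sum.inr m)⟫
          = (ρ ^ 2 - 1/2) + (if i = m then (1/2 : ℝ) else 0) := by
        intro i
        by_cases h : i = m
        · subst h
          rw [show w (Sum.inr i) = b i - o from rfl,
            hip _ _ (hob i) (hob i), dist_self, if_pos rfl]
          ring
        · rw [show w (Sum.inr i) = b i - o from rfl,
            show w (Sum.inr m) = b m - o from rfl,
            hip _ _ (hob i) (hob m), hbb i m h, if_neg h]
          ring
      simp only [e1, e2, mul_add, Finset.sum_add_distrib, mul_ite, mul_zero,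
        Finset.sum_ite_eq', Finset.mem_univ, if_true, ← Finset.sum_mul] at h0
      rw [← hA, ← hB] at h0
      linarith
  -- α m = β m for all m
  have heq : ∀ m, g (Sum.inl m) = g (Sum.inr m) := by
    intro m
    have h1 := (hrow m).1
    have h2 := (hrow m).2
    have hs2' : (0:ℝ) < s ^ 2 := by positivity
    nlinarith [h1, h2]
  -- each coefficient equals γ
  have hconst : ∀ m, (1 - 2 * s ^ 2) * g (Sum.inl m) = (1/2 - ρ ^ 2) * (A + B) := by
    intro m
    have h1 := (hrow m).1
    rw [← heq m] at h1
    linarith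
  -- A = B = (ℓ+1) γ
  obtain ⟨γ, hγ⟩ : ∃ γ : ℝ, ∀ m, g (Sum.inl m) = γ := by
    refine ⟨g (Sum.inl 0), fun m => ?_⟩
    have h1 := hconst m
    have h2 := hconst 0
    have hne : (1 - 2 * s ^ 2) ≠ 0 := by nlinarith
    field_simp at h1 h2
    nlinarith [h1, h2]
  have hAγ : A = (ℓ + 1 : ℝ) * γ := by
    rw [hA]
    simp [hγ, Finset.sum_const, mul_comm]
  have hBγ : B = (ℓ + 1 : ℝ) * γ := by
    rw [hB]
    have : ∀ m, g (Sum.inr m) = γ := fun m => (heq m).symm.trans (hγ m)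
    simp [this, Finset.sum_const, mul_comm]
  have hγne : γ ≠ 0 := by
    intro h
    subst h
    cases k₀ with
    | inl i => exact hk₀ (hγ i)
    | inr i => exact hk₀ ((heq i).symm.trans (hγ i))
  have hkey : (1 - 2 * s ^ 2) = (1/2 - ρ ^ 2) * (2 * (ℓ:ℝ) + 2) := by
    have h1 := hconst 0
    rw [hγ 0, hAγ, hBγ] at h1
    have h2 : (1 - 2 * s ^ 2) * γ = (1/2 - ρ ^ 2) * (2 * (ℓ:ℝ) + 2) * γ := by
      rw [h1]; ring
    exact mul_right_cancel₀ hγne h2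
  have hden : (0:ℝ) < 2 * (ℓ:ℝ) + 2 := by positivity
  constructor
  · field_simp
    linarith [hkey]
  · have hden2 : ((ℓ:ℝ) + 1) ≠ 0 := by positivity
    field_simp
    nlinarith [hkey]
end

section
/- Let C_z be the circle of radius 1 centered at (-1/2,0,0) in the plane z = 0, and C_y the circle of radius 1 centered at (1/2,0,0) in the plane y = 0, in R^3. Then for every point a on C_z and every point b on C_y, the Euclidean distance between a and b is at least 1. -/
open Real

/-- A point of `ℝ³` with the Euclidean (ℓ²) metric. -/
noncomputable def pt3 (x y z : ℝ) : EuclideanSpace ℝ (Fin 3) :=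
  (WithLp.equiv 2 (Fin 3 → ℝ)).symm ![x, y, z]

/-- Any point on the unit circle `C_z` centered at `(-1/2,0,0)` in the plane `z = 0`
and any point on the unit circle `C_y` centered at `(1/2,0,0)` in the plane `y = 0`
are at distance at least `1`. -/
theorem linked_circles_dist_ge_one (φ ψ : ℝ) :
    1 ≤ dist (pt3 (-1/2 + cos φ) (sin φ) 0) (pt3 (1/2 - cos ψ) 0 (sin ψ)) := by
  rw [EuclideanSpace.dist_eq]
  apply Real.one_le_sqrt.mpr
  simp only [Fin.sum_univ_three, pt3, WithLp.equiv_symm_apply, PiLp.toLp_apply, Matrix.cons_val_zero,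
    Matrix.cons_val_one, Matrix.head_cons, Matrix.cons_val_two, Matrix.tail_cons,
    Real.dist_eq]
  rw [sq_abs, sq_abs, sq_abs]
  have h1 := sin_sq_add_cos_sq φ
  have h2 := sin_sq_add_cos_sq ψ
  have h3 : (1 - cos φ) * (1 - cos ψ) ≥ 0 :=
    mul_nonneg (by nlinarith [cos_le_one φ]) (by nlinarith [cos_le_one ψ])
  nlinarith
end

section
/- Let 0 < Δ < 1, a0 = (-1/2 + sqrt(1-Δ^2), -Δ, 0) and b0 = (1/2 - sqrt(1-Δ^2), 0, -Δ) in R^3. Then the squared distance between a0 and b0 satisfies 1 ≤ |a0 - b0|^2 ≤ 1 + 2Δ^4. -/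
lemma pt3_dist_sq (a b c d e f : ℝ) :
    dist (pt3 a b c) (pt3 d e f) ^ 2 = (a - d)^2 + (b - e)^2 + (c - f)^2 := by
  rw [EuclideanSpace.dist_eq, Real.sq_sqrt (by positivity)]
  simp [pt3, Fin.sum_univ_three, Real.dist_eq, sq_abs]

/-- For `0 < Δ < 1`, the squared distance between
`a₀ = (-1/2 + √(1-Δ²), -Δ, 0)` and `b₀ = (1/2 - √(1-Δ²), 0, -Δ)` lies in `[1, 1+2Δ⁴]`. -/
theorem long_edge_bounds (Δ : ℝ) (h0 : 0 < Δ) (h1 : Δ < 1) :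
    1 ≤ dist (pt3 (-1/2 + Real.sqrt (1 - Δ ^ 2)) (-Δ) 0)
          (pt3 (1/2 - Real.sqrt (1 - Δ ^ 2)) 0 (-Δ)) ^ 2 ∧
    dist (pt3 (-1/2 + Real.sqrt (1 - Δ ^ 2)) (-Δ) 0)
          (pt3 (1/2 - Real.sqrt (1 - Δ ^ 2)) 0 (-Δ)) ^ 2 ≤ 1 + 2 * Δ ^ 4 := by
  rw [pt3_dist_sq]
  set s := Real.sqrt (1 - Δ ^ 2) with hs
  have hs2 : s ^ 2 = 1 - Δ ^ 2 := Real.sq_sqrt (by nlinarith)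
  have hsnn : 0 ≤ s := Real.sqrt_nonneg _
  constructor
  · nlinarith [sq_nonneg (Δ^2), sq_nonneg (2*s - (2 - Δ^2)), sq_nonneg Δ]
  · nlinarith [sq_nonneg (2*s - (2 - Δ^2 - Δ^4)), sq_nonneg Δ, sq_nonneg (Δ^2), sq_nonneg (Δ^3), mul_pos h0 h0]
end
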